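/- arXiv:2407.13004 — 7 statements merged into one kernel-verified Lean document; each statement's English description precedes it below -/
import Mathlib

section
/- For complex s with Re(s) > 1 and real a with 0 < a ≤ 1, the Hurwitz zeta function satisfies ζ(1−s, a) = (2Γ(s)/(2π)^s) · Σ_{n=1}^∞ cos(πs/2 − 2nπa)/n^s. -/
open HurwitzZeta Real Filter

/-! Expanding `cos (π s / 2 - 2 π n a)` by the subtraction formula splits the series into
`cos (π s / 2) * cosZeta a s + sin (π s / 2) * sinZeta a s`, and the functional equations of the
even and odd parts of `hurwitzZeta` express `hurwitzZeta a (1 - s)` as `2 (2π)^(-s) Γ(s)` times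
that same combination. -/

namespace HurwitzZeta

lemma hurwitzZeta_one_sub_eq_cos_mul_cosZeta_add_sin_mul_sinZeta (a : UnitAddCircle) {s : ℂ}
    (hs : ∀ n : ℕ, s ≠ -n) (hs' : a ≠ 0 ∨ s ≠ 1) :
    hurwitzZeta a (1 - s) = 2 * (2 * π) ^ (-s) * Complex.Gamma s *
      (Complex.cos (π * s / 2) * cosZeta a s + Complex.sin (π * s / 2) * sinZeta a s) := by
  rw [hurwitzZeta, hurwitzZetaEven_one_sub a hs hs', hurwitzZetaOdd_one_sub a hs]
  ring

lemma hasSum_pnat_cos_sub_div_cpow (a : ℝ) {s : ℂ} (hs : 1 < s.re) :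
    HasSum (fun n : ℕ+ ↦ Complex.cos (π * s / 2 - 2 * n * π * a) / (n : ℂ) ^ s)
      (Complex.cos (π * s / 2) * cosZeta a s + Complex.sin (π * s / 2) * sinZeta a s) := by
  have hnat := ((hasSum_nat_cosZeta a hs).mul_left (Complex.cos (π * s / 2))).add
    ((hasSum_nat_sinZeta a hs).mul_left (Complex.sin (π * s / 2)))
  refine (hasSum_pnat_iff (f := fun n : ℕ ↦
    Complex.cos (π * s / 2 - 2 * n * π * a) / (n : ℂ) ^ s)).mpr ?_
  simp only [Nat.cast_zero, Complex.zero_cpow (Complex.ne_zero_of_one_lt_re hs), div_zero, add_zero]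
  refine hnat.congr_fun fun n ↦ ?_
  rw [Complex.cos_sub]
  push_cast
  ring_nf

end HurwitzZeta

theorem hurwitz_formula_general (s : ℂ) (hs : 1 < s.re) (a : ℝ) :
    hurwitzZeta (a : UnitAddCircle) (1 - s) =
      2 * Complex.Gamma s / ((2 * π : ℝ) : ℂ) ^ s *
        ∑' n : ℕ+, Complex.cos (π * s / 2 - 2 * n * π * a) / (n : ℂ) ^ s := by
  have hs_not_neg_nat (n : ℕ) : s ≠ -n := fun h ↦ by
    have : s.re ≤ 0 := by simp [h]
    linarith
  have hs_ne_one : s ≠ 1 := fun h ↦ by simp [h] at hs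
  rw [hurwitzZeta_one_sub_eq_cos_mul_cosZeta_add_sin_mul_sinZeta _ hs_not_neg_nat (.inr hs_ne_one),
    (hasSum_pnat_cos_sub_div_cpow a hs).tsum_eq, Complex.cpow_neg]
  push_cast
  ring

theorem hurwitz_formula (s : ℂ) (hs : 1 < s.re) (a : ℝ) (ha : 0 < a) (ha' : a ≤ 1) :
    hurwitzZeta (a : UnitAddCircle) (1 - s) =
      2 * Complex.Gamma s / ((2 * π : ℝ) : ℂ) ^ s *
        ∑' n : ℕ+, Complex.cos (π * s / 2 - 2 * n * π * a) / (n : ℂ) ^ s :=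
  hurwitz_formula_general s hs a
end

section
/- For complex s with Re(s) > 1, s not an integer, real x with 0 < x < 2π, and real y, one has Σ_{n=1}^∞ sin(nx+y)/n^s = ((2π)^s / (2 Γ(s) sin(πs))) · ( cos(y − πs/2) ζ(1−s, x/(2π)) − cos(y + πs/2) ζ(1−s, 1 − x/(2π)) ). -/
open HurwitzZeta Real Filter

/-!
With `a = x / (2π)`, the addition formula `sin (n x + y) = sin (n x) cos y + cos (n x) sin y`
writes the series as `cos y · sinZeta a s + sin y · cosZeta a s`. On the other side,
`ζ(1 - s, ±a)` is the sum resp. difference of the even and odd parts of the Hurwitz zeta function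
at `1 - s` (and `1 - a = -a` on `ℝ / ℤ`), which the functional equations turn into multiples of
`cosZeta a s` and `sinZeta a s` by `cos (π s / 2)` and `sin (π s / 2)`. Expanding `cos (y ∓ π s / 2)`
recombines everything into `sin (π s) = 2 sin (π s / 2) cos (π s / 2)` times the series.
-/

lemma hasSum_sin_mul_add_div_cpow (x : ℝ) (y : ℂ) {s : ℂ} (hs : 1 < s.re) :
    HasSum (fun n : ℕ ↦ Complex.sin ((n : ℂ) * x + y) / (n : ℂ) ^ s)
      (Complex.cos y * sinZeta (x / (2 * π) : ℝ) s +
        Complex.sin y * cosZeta (x / (2 * π) : ℝ) s) := by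
  have hx (n : ℕ) : 2 * π * (x / (2 * π)) * n = n * x := by field_simp
  refine (((hasSum_nat_sinZeta (x / (2 * π)) hs).mul_left (Complex.cos y)).add
    ((hasSum_nat_cosZeta (x / (2 * π)) hs).mul_left (Complex.sin y))).congr_fun fun n ↦ ?_
  rw [hx, Complex.sin_add]
  push_cast
  ring

lemma cos_mul_hurwitzZeta_one_sub_sub_cos_mul_hurwitzZeta_neg_one_sub (a : UnitAddCircle)
    {s : ℂ} (hs : ∀ n : ℕ, s ≠ -n) (hs' : a ≠ 0 ∨ s ≠ 1) (y : ℂ) :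
    Complex.cos (y - π * s / 2) * hurwitzZeta a (1 - s) -
        Complex.cos (y + π * s / 2) * hurwitzZeta (-a) (1 - s) =
      2 * (2 * π) ^ (-s) * Complex.Gamma s * Complex.sin (π * s) *
        (Complex.cos y * sinZeta a s + Complex.sin y * cosZeta a s) := by
  simp only [hurwitzZeta, hurwitzZetaEven_neg, hurwitzZetaOdd_neg,
    hurwitzZetaEven_one_sub a hs hs', hurwitzZetaOdd_one_sub a hs]
  have h2 : Complex.sin (π * s) = 2 * Complex.sin (π * s / 2) * Complex.cos (π * s / 2) := by
    rw [← Complex.sin_two_mul, mul_div_cancel₀ _ two_ne_zero]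
  rw [h2, Complex.cos_sub, Complex.cos_add]
  ring

theorem sin_series_hurwitz_general (s : ℂ) (hs : 1 < s.re) (hsi : ∀ n : ℤ, s ≠ n)
    (x y : ℝ) :
    ∑' n : ℕ+, Complex.sin ((n : ℂ) * x + y) / (n : ℂ) ^ s =
      ((2 * π : ℝ) : ℂ) ^ s / (2 * Complex.Gamma s * Complex.sin (π * s)) *
        (Complex.cos ((y : ℂ) - π * s / 2) *
            hurwitzZeta ((x / (2 * π) : ℝ) : UnitAddCircle) (1 - s) -
          Complex.cos ((y : ℂ) + π * s / 2) *
            hurwitzZeta ((1 - x / (2 * π) : ℝ) : UnitAddCircle) (1 - s)) := by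
  have hsn (n : ℕ) : s ≠ -n := by exact_mod_cast hsi (-n)
  have hΓ : Complex.Gamma s ≠ 0 := Complex.Gamma_ne_zero hsn
  have hsin : Complex.sin (π * s) ≠ 0 := by
    rw [Complex.sin_ne_zero_iff]
    intro k hk
    exact hsi k (mul_left_cancel₀ (Complex.ofReal_ne_zero.2 pi_ne_zero) (hk.trans (mul_comm _ _)))
  have hpow : (2 * (π : ℂ)) ^ s * (2 * π) ^ (-s) = 1 := by
    rw [Complex.cpow_neg, mul_inv_cancel₀ (by simp [pi_ne_zero])]
  have hneg : ((1 - x / (2 * π) : ℝ) : UnitAddCircle) = -((x / (2 * π) : ℝ) : UnitAddCircle) := by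
    rw [AddCircle.coe_sub, AddCircle.coe_period, zero_sub]
  rw [tsum_pnat_eq_tsum_of_eq_zero
      (f := fun n : ℕ ↦ Complex.sin ((n : ℂ) * x + y) / (n : ℂ) ^ s)
      (by simp [Complex.zero_cpow (Complex.ne_zero_of_one_lt_re hs)]),
    (hasSum_sin_mul_add_div_cpow x y hs).tsum_eq, hneg,
    cos_mul_hurwitzZeta_one_sub_sub_cos_mul_hurwitzZeta_neg_one_sub _ hsn
      (.inr fun h ↦ hsi 1 (by simp [h])) y]
  push_cast
  field_simp
  linear_combination -(Complex.cos y * sinZeta (x / (2 * π) : ℝ) s +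
    Complex.sin y * cosZeta (x / (2 * π) : ℝ) s) * hpow

theorem sin_series_hurwitz (s : ℂ) (hs : 1 < s.re) (hsi : ∀ n : ℤ, s ≠ n)
    (x y : ℝ) (hx : 0 < x) (hx' : x < 2 * π) :
    ∑' n : ℕ+, Complex.sin ((n : ℂ) * x + y) / (n : ℂ) ^ s =
      ((2 * π : ℝ) : ℂ) ^ s / (2 * Complex.Gamma s * Complex.sin (π * s)) *
        (Complex.cos ((y : ℂ) - π * s / 2) *
            hurwitzZeta ((x / (2 * π) : ℝ) : UnitAddCircle) (1 - s) -
          Complex.cos ((y : ℂ) + π * s / 2) *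
            hurwitzZeta ((1 - x / (2 * π) : ℝ) : UnitAddCircle) (1 - s)) :=
  sin_series_hurwitz_general s hs hsi x y
end

section
/- For complex s with Re(s) > 1, s not an integer, real x with 0 < x < 2π, and real y, one has Σ_{n=1}^∞ cos(nx+y)/n^s = ((2π)^s / (2 Γ(s) sin(πs))) · ( sin(y + πs/2) ζ(1−s, 1 − x/(2π)) − sin(y − πs/2) ζ(1−s, x/(2π)) ). -/
open HurwitzZeta Real Filter

/-!
Splitting `cos (n x + y)` into exponentials writes the series as
`(e^{iy} F(a) + e^{-iy} F(-a)) / 2`, where `F(±a) = expZeta (±a) s` and `x = 2π a`.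
The functional equation expresses `ζ(1 - s, a)` and `ζ(1 - s, -a)` as combinations of
`F(a)` and `F(-a)` with coefficients `e^{∓iπs/2}`; the sine combination of the statement
inverts this linear system, its determinant contributing `sin (π s)`.
-/

open Complex in
theorem hasSum_cos_mul_add_div_cpow (a : ℝ) (w : ℂ) {s : ℂ} (hs : 1 < s.re) :
    HasSum (fun n : ℕ ↦ cos (n * ↑(2 * π * a) + w) / (n : ℂ) ^ s)
      ((exp (w * I) * expZeta a s + exp (-w * I) * expZeta (-a : UnitAddCircle) s) / 2) := by
  have hneg := hasSum_expZeta_of_one_lt_re (-a) hs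
  rw [AddCircle.coe_neg] at hneg
  refine (((hasSum_expZeta_of_one_lt_re a hs).mul_left (exp (w * I))).add
    (hneg.mul_left (exp (-w * I))) |>.div_const 2).congr_fun fun n ↦ ?_
  simp only [Complex.cos.eq_1, ← mul_div_assoc, ← Complex.exp_add]
  push_cast
  ring_nf

open Complex in
theorem hurwitzZeta_one_sub_sin_combination (a : UnitAddCircle) (w : ℂ) {s : ℂ}
    (hs : ∀ n : ℕ, s ≠ -n) (hs' : a ≠ 0 ∨ s ≠ 1) :
    sin (w + π * s / 2) * hurwitzZeta (-a) (1 - s) - sin (w - π * s / 2) * hurwitzZeta a (1 - s) =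
      (2 * π) ^ (-s) * Gamma s * sin (π * s) *
        (exp (w * I) * expZeta a s + exp (-w * I) * expZeta (-a) s) := by
  rw [show sin (π * s) = sin (2 * (π * s / 2)) by ring_nf, hurwitzZeta_one_sub a hs hs',
    hurwitzZeta_one_sub (-a) hs (hs'.imp_left neg_ne_zero.2), neg_neg,
    show -π * I * s / 2 = -(π * s / 2) * I by ring, show π * I * s / 2 = (π * s / 2) * I by ring]
  generalize π * s / 2 = t
  simp only [exp_mul_I, Complex.sin_add, Complex.sin_sub, Complex.sin_two_mul, Complex.cos_neg,
    Complex.sin_neg]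
  ring

namespace UnitAddCircle

theorem coe_one_sub (a : ℝ) : ((1 - a : ℝ) : UnitAddCircle) = -(a : UnitAddCircle) := by
  rw [AddCircle.coe_sub, AddCircle.coe_period, zero_sub]

theorem coe_ne_zero_of_mem_Ioo {a : ℝ} (ha : a ∈ Set.Ioo 0 1) : (a : UnitAddCircle) ≠ 0 := by
  rw [Ne, AddCircle.coe_eq_zero_iff_of_mem_Ico (Set.Ioo_subset_Ico_self ha)]
  exact ha.1.ne'

end UnitAddCircle

theorem cos_series_hurwitz (s : ℂ) (hs : 1 < s.re) (hsi : ∀ n : ℤ, s ≠ n)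
    (x y : ℝ) (hx : 0 < x) (hx' : x < 2 * π) :
    ∑' n : ℕ+, Complex.cos ((n : ℂ) * x + y) / (n : ℂ) ^ s =
      ((2 * π : ℝ) : ℂ) ^ s / (2 * Complex.Gamma s * Complex.sin (π * s)) *
        (Complex.sin ((y : ℂ) + π * s / 2) *
            hurwitzZeta ((1 - x / (2 * π) : ℝ) : UnitAddCircle) (1 - s) -
          Complex.sin ((y : ℂ) - π * s / 2) *
            hurwitzZeta ((x / (2 * π) : ℝ) : UnitAddCircle) (1 - s)) := by
  have hs_int : s ∈ Complex.integerComplement := fun ⟨n, hn⟩ ↦ hsi n hn.symm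
  have hs_nat (n : ℕ) : s ≠ -n := by exact_mod_cast hsi (-n)
  obtain ⟨a, rfl⟩ : ∃ a, x = 2 * π * a := ⟨x / (2 * π), by field_simp⟩
  have ha : a ∈ Set.Ioo 0 1 := by constructor <;> nlinarith [pi_pos]
  rw [mul_div_cancel_left₀ _ (by positivity), UnitAddCircle.coe_one_sub,
    hurwitzZeta_one_sub_sin_combination _ _ hs_nat (.inl (UnitAddCircle.coe_ne_zero_of_mem_Ioo ha)),
    tsum_pnat_eq_tsum_of_eq_zero
      (f := fun n : ℕ ↦ Complex.cos (n * ↑(2 * π * a) + y) / (n : ℂ) ^ s)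
      (by simp [Complex.zero_cpow (Complex.integerComplement.ne_zero hs_int)]),
    (hasSum_cos_mul_add_div_cpow a y hs).tsum_eq, Complex.cpow_neg]
  have hGamma := Complex.Gamma_ne_zero hs_nat
  have hsin := sin_pi_mul_ne_zero hs_int
  have hpow : ((2 * π : ℝ) : ℂ) ^ s ≠ 0 := by simp [Complex.cpow_eq_zero_iff, pi_ne_zero]
  push_cast at hpow ⊢
  field_simp
end

section
/- For all natural numbers m, p ≥ 1 and every natural n ≥ 1, the following partial fraction identity holds: (m+n)(m+n+1)⋯(m+n+p−1) / [(2n)(2n+1)⋯(2n+2p+2m−1)] = (1/2^p) · 1/[(2n)(2n+1)⋯(2n+2m−1) · (2n+2m+1)(2n+2m+3)⋯(2n+2m+2p−1)]. -/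
open Finset

lemma pochhammer_decomposition_aux (m : ℕ) (x : ℝ) : ∀ p : ℕ,
    ∏ i ∈ range (2 * p + 2 * m), (2 * x + i) =
      2 ^ p * (∏ i ∈ range p, ((m : ℝ) + x + i)) * (∏ i ∈ range (2 * m), (2 * x + i)) *
        ∏ k ∈ range p, (2 * x + 2 * m + 2 * k + 1) := by
  intro p
  induction p with
  | zero => simp
  | succ p ih =>
    have h : 2 * (p + 1) + 2 * m = (2 * p + 2 * m) + 1 + 1 := by ring
    rw [h, prod_range_succ, prod_range_succ, ih, prod_range_succ, prod_range_succ]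
    push_cast
    ring

theorem pochhammer_decomposition (m p n : ℕ) (hm : 1 ≤ m) (hp : 1 ≤ p) (hn : 1 ≤ n) :
    (∏ i ∈ range p, ((m : ℝ) + n + i)) / (∏ i ∈ range (2 * p + 2 * m), (2 * (n : ℝ) + i)) =
      (1 / 2 ^ p) * (1 / ((∏ i ∈ range (2 * m), (2 * (n : ℝ) + i)) *
        ∏ k ∈ range p, (2 * (n : ℝ) + 2 * m + 2 * k + 1))) := by
  have hn' : (1:ℝ) ≤ (n:ℝ) := by exact_mod_cast hn
  have hm' : (1:ℝ) ≤ (m:ℝ) := by exact_mod_cast hm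
  have hQ : (0:ℝ) < ∏ i ∈ range p, ((m : ℝ) + n + i) := by
    apply Finset.prod_pos
    intro i _
    have : (0:ℝ) ≤ (i:ℝ) := Nat.cast_nonneg i
    linarith
  have hD : (0:ℝ) < ∏ i ∈ range (2 * m), (2 * (n : ℝ) + i) := by
    apply Finset.prod_pos
    intro i _
    have : (0:ℝ) ≤ (i:ℝ) := Nat.cast_nonneg i
    linarith
  have hO : (0:ℝ) < ∏ k ∈ range p, (2 * (n : ℝ) + 2 * m + 2 * k + 1) := by
    apply Finset.prod_pos
    intro i _
    have : (0:ℝ) ≤ (i:ℝ) := Nat.cast_nonneg i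
    linarith
  rw [pochhammer_decomposition_aux m (n:ℝ) p]
  field_simp
end

section
/- For natural numbers m, k ≥ 1 and every natural n ≥ 1, one has 1/[(2n)_{2m} · (2n+2m+2k−1)] = Σ_{j=0}^{2k−1} (−1)^j · (2k−1)(2k−2)⋯(2k−j) / (2n)_{2m+j+1}, where the empty product (j = 0) equals 1. -/
open Finset

lemma pochhammer_aux (x : ℝ) (hx : 0 < x) : ∀ N M : ℕ,
    1 / ((∏ i ∈ range M, (x + i)) * (x + M + N)) =
      ∑ j ∈ range (N + 1), (-1 : ℝ) ^ j * (∏ i ∈ range j, ((N : ℝ) - i)) /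
        ∏ i ∈ range (M + j + 1), (x + i) := by
  intro N
  induction N with
  | zero =>
    intro M
    simp [Finset.prod_range_succ]
  | succ N ih =>
    intro M
    have hA : ∀ t : ℕ, (∏ i ∈ range t, (x + i)) ≠ 0 := fun t =>
      Finset.prod_ne_zero_iff.mpr fun i _ => by positivity
    have h1 : x + M ≠ 0 := by positivity
    have h2 : x + M + ((N : ℝ) + 1) ≠ 0 := by positivity
    have h3 : x + (M + 1 : ℕ) + N ≠ 0 := by push_cast; positivity
    rw [Finset.sum_range_succ']
    have key : ∀ j, (-1 : ℝ) ^ (j + 1) * (∏ i ∈ range (j + 1), (((N + 1 : ℕ) : ℝ) - i)) /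
        ∏ i ∈ range (M + (j + 1) + 1), (x + i)
        = -(((N : ℝ) + 1) * ((-1 : ℝ) ^ j * (∏ i ∈ range j, ((N : ℝ) - i)) /
            ∏ i ∈ range ((M + 1) + j + 1), (x + i))) := by
      intro j
      have hp : ∏ i ∈ range (j + 1), (((N + 1 : ℕ) : ℝ) - i)
          = (∏ i ∈ range j, ((N : ℝ) - i)) * ((N : ℝ) + 1) := by
        rw [Finset.prod_range_succ']
        congr 1
        · exact Finset.prod_congr rfl fun i _ => by push_cast; ring
        · push_cast; ring
      have hq : M + (j + 1) + 1 = (M + 1) + j + 1 := by ring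
      rw [hp, hq]
      ring
    rw [Finset.sum_congr rfl fun j _ => key j]
    rw [Finset.sum_neg_distrib, ← Finset.mul_sum, ← ih (M + 1)]
    rw [Finset.prod_range_succ]
    push_cast
    field_simp
    ring

theorem pochhammer_partial_fraction (m k n : ℕ) (hm : 1 ≤ m) (hk : 1 ≤ k) (hn : 1 ≤ n) :
    1 / ((∏ i ∈ range (2 * m), (2 * (n : ℝ) + i)) * (2 * (n : ℝ) + 2 * m + 2 * k - 1)) =
      ∑ j ∈ range (2 * k), (-1 : ℝ) ^ j * (∏ i ∈ range j, (2 * (k : ℝ) - 1 - i)) /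
        ∏ i ∈ range (2 * m + j + 1), (2 * (n : ℝ) + i) := by
  have hx : (0 : ℝ) < 2 * n := by positivity
  have h := pochhammer_aux (2 * (n : ℝ)) hx (2 * k - 1) (2 * m)
  have h2k : 2 * k - 1 + 1 = 2 * k := by omega
  rw [h2k] at h
  have hc : ((2 * k - 1 : ℕ) : ℝ) = 2 * (k : ℝ) - 1 := by
    have : (1 : ℕ) ≤ 2 * k := by omega
    push_cast [Nat.cast_sub this]
    ring
  rw [hc] at h
  rw [← h]
  congr 1
  push_cast
  ring
end

section
/- For every natural m ≥ 1, the limit as s → 2m−1 of [ π x^{s−1}/(2 Γ(s) cos(πs/2)) + (−1)^{m−1} ζ(s−2m+2) x^{2m−2}/(2m−2)! ] equals ((−1)^m x^{2m−2}/(2m−2)!) · (log x − H_{2m−2}), for any fixed real x > 0. -/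
/-!
Write `a = 2m - 1` and `t = s - a`. Since `cos (πs/2) = (-1)^m sin (πt/2)` and the reflection
formula gives `π / (2 sin (πt/2)) = Γ(1 + t/2) Γ(1 - t/2) / t`, the first term equals
`(-1)^m F(s) / (s - a)` with `F(s) = Γ(1 + t/2) Γ(1 - t/2) x^(s-1) / Γ(s)` holomorphic at `a`.
The second term is `-(-1)^m ζ(t + 1) F(a)`, so the poles cancel and the limit is
`-(-1)^m (γ F(a) - F'(a))`. As `Γ(1 + z) Γ(1 - z)` is even, `F'(a)` is the derivative of
`x^(s-1) / Γ(s)` at `a`, namely `F(a) (log x + γ - H_{2m-2})`.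
-/

open Real Filter Topology
open scoped Nat

local notation "γ" => Real.eulerMascheroniConstant

lemma tendsto_riemannZeta_mul_sub_div_sub {f : ℂ → ℂ} {f' a : ℂ} (hf : HasDerivAt f f' a) :
    Tendsto (fun s ↦ riemannZeta (s - a + 1) * f a - f s / (s - a)) (𝓝[≠] a)
      (𝓝 ((γ : ℂ) * f a - f')) := by
  have hshift : Tendsto (· + (1 - a)) (𝓝[≠] a) (𝓝[≠] 1) := by
    simpa using tendsto_map (f := (· + (1 - a))) (x := 𝓝[≠] a)
  have hzeta := (tendsto_riemannZeta_sub_one_div.comp hshift).mul_const (f a)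
  refine (hzeta.sub (hasDerivAt_iff_tendsto_slope.mp hf)).congr fun s ↦ ?_
  simp only [Function.comp_apply, slope_def_field]
  ring_nf

namespace Complex

lemma Gamma_one_add_mul_Gamma_one_sub {z : ℂ} (hz : z ≠ 0) :
    Gamma (1 + z) * Gamma (1 - z) = π * z / sin (π * z) := by
  rw [add_comm, Gamma_add_one z hz, mul_assoc, Gamma_mul_Gamma_one_sub]
  ring

lemma hasDerivAt_Gamma_one_add_mul_Gamma_one_sub :
    HasDerivAt (fun z ↦ Gamma (1 + z) * Gamma (1 - z)) 0 0 := by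
  have hadd : HasDerivAt (fun z ↦ Gamma (1 + z)) (-γ) 0 :=
    .comp_const_add 1 0 (by simpa using hasDerivAt_Gamma_one)
  have hsub : HasDerivAt (fun z ↦ Gamma (1 - z)) (-(-γ)) 0 :=
    .comp_const_sub 1 0 (by simpa using hasDerivAt_Gamma_one)
  exact (hadd.fun_mul hsub).congr_deriv (by simp)

lemma hasDerivAt_cpow_sub_one_div_Gamma {x : ℂ} (hx : x ≠ 0) (n : ℕ) :
    HasDerivAt (fun s ↦ x ^ (s - 1) / Gamma s)
      (x ^ n / n ! * (log x + γ - harmonic n)) ((n : ℂ) + 1) := by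
  have hpow : HasDerivAt (fun s ↦ x ^ (s - 1)) (x ^ n * log x) ((n : ℂ) + 1) := by
    simpa using HasDerivAt.comp_sub_const (n + 1 : ℂ) 1
      (by simpa using (hasStrictDerivAt_const_cpow (Or.inl hx) (y := (n : ℂ))).hasDerivAt)
  have hΓ : Gamma (n + 1) = n ! := Gamma_nat_eq_factorial n
  refine (hpow.fun_div (hasDerivAt_Gamma_nat n) ?_).congr_deriv ?_
  · rw [hΓ]
    exact_mod_cast n.factorial_ne_zero
  · rw [hΓ, add_sub_cancel_right, cpow_natCast]
    field_simp
    ring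

/-- The function `F` of the sketch above: for `s ≠ a` it is
`(s - a) π x^(s-1) / (2 Γ(s) sin (π(s - a)/2))`, by `Gamma_one_add_mul_Gamma_one_sub`. -/
noncomputable def oddPoleNumerator (x a s : ℂ) : ℂ :=
  Gamma (1 + (s - a) / 2) * Gamma (1 - (s - a) / 2) * (x ^ (s - 1) / Gamma s)

lemma oddPoleNumerator_self (x : ℂ) (n : ℕ) :
    oddPoleNumerator x (n + 1) (n + 1) = x ^ n / n ! := by
  simp [oddPoleNumerator, Gamma_nat_eq_factorial]

lemma hasDerivAt_oddPoleNumerator {x : ℂ} (hx : x ≠ 0) (n : ℕ) :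
    HasDerivAt (oddPoleNumerator x (n + 1)) (x ^ n / n ! * (log x + γ - harmonic n))
      ((n : ℂ) + 1) := by
  have hshift : HasDerivAt (fun s : ℂ ↦ (s - (n + 1)) / 2) (1 / 2) ((n : ℂ) + 1) :=
    ((hasDerivAt_id _).sub_const _).div_const 2
  have hreg := hasDerivAt_Gamma_one_add_mul_Gamma_one_sub.comp_of_eq _ hshift (by simp)
  refine (hreg.fun_mul (hasDerivAt_cpow_sub_one_div_Gamma hx n)).congr_deriv ?_
  simp

lemma cos_pi_mul_div_two_eq_neg_neg_one_pow_mul_sin (k : ℕ) (s : ℂ) :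
    cos (π * s / 2) = -(-1) ^ k * sin (π * (s - ((2 * k : ℕ) + 1)) / 2) := by
  have harg : π * s / 2 = π * (s - ((2 * k : ℕ) + 1)) / 2 + π / 2 + k * π := by
    push_cast
    ring
  rw [harg, cos_antiperiodic.add_nat_mul_eq, cos_add_pi_div_two]
  ring

lemma pi_mul_cpow_div_Gamma_mul_cos_eq_oddPoleNumerator_div (k : ℕ) (x : ℂ) {s : ℂ}
    (hs : s ≠ (2 * k : ℕ) + 1) :
    π * x ^ (s - 1) / (2 * Gamma s * cos (π * s / 2)) =
      -(-1) ^ k * oddPoleNumerator x ((2 * k : ℕ) + 1) s / (s - ((2 * k : ℕ) + 1)) := by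
  have ht : (s - ((2 * k : ℕ) + 1)) / 2 ≠ 0 := div_ne_zero (sub_ne_zero.mpr hs) two_ne_zero
  rw [cos_pi_mul_div_two_eq_neg_neg_one_pow_mul_sin k, oddPoleNumerator,
    Gamma_one_add_mul_Gamma_one_sub ht]
  have hsign : ((-1 : ℂ) ^ k) ^ 2 = 1 := by rw [← pow_mul, pow_mul', neg_one_sq, one_pow]
  field_simp
  rw [hsign, mul_one]

end Complex

theorem limit_pole_cancellation (m : ℕ) (hm : 1 ≤ m) (x : ℝ) (hx : 0 < x) :
    Tendsto (fun s : ℂ =>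
        (π : ℂ) * (x : ℂ) ^ (s - 1) / (2 * Complex.Gamma s * Complex.cos (π * s / 2)) +
          (-1) ^ (m - 1) * riemannZeta (s - 2 * m + 2) * (x : ℂ) ^ (2 * m - 2) /
            ((2 * m - 2).factorial : ℂ))
      (nhdsWithin (2 * m - 1 : ℂ) {(2 * m - 1 : ℂ)}ᶜ)
      (nhds ((-1) ^ m * (x : ℂ) ^ (2 * m - 2) / ((2 * m - 2).factorial : ℂ) *
        ((Real.log x : ℂ) - ((harmonic (2 * m - 2) : ℝ) : ℂ)))) := by
  obtain ⟨k, rfl⟩ : ∃ k, m = k + 1 := ⟨m - 1, by omega⟩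
  have ha : 2 * ((k + 1 : ℕ) : ℂ) - 1 = (2 * k : ℕ) + 1 := by push_cast; ring
  have hlim := (tendsto_riemannZeta_mul_sub_div_sub
    (Complex.hasDerivAt_oddPoleNumerator (x := x) (by exact_mod_cast hx.ne') (2 * k))).const_mul
    ((-1) ^ k)
  rw [Complex.oddPoleNumerator_self] at hlim
  rw [show 2 * (k + 1) - 2 = 2 * k by omega, add_tsub_cancel_right, ha]
  refine (hlim.mono_right (le_of_eq (congrArg 𝓝 ?_))).congr'
    (eventually_nhdsWithin_of_forall fun s hs ↦ ?_)
  · rw [Complex.ofReal_log hx.le]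
    push_cast
    ring
  · beta_reduce
    rw [Complex.pi_mul_cpow_div_Gamma_mul_cos_eq_oddPoleNumerator_div k _ hs,
      show s - 2 * ((k + 1 : ℕ) : ℂ) + 2 = s - ((2 * k : ℕ) + 1) + 1 by push_cast; ring]
    ring
end

section
/- For m, p ∈ ℕ with m, p ≥ 1 and real x with 0 < x < 2π, Σ_{n=1}^∞ [(m+n)_p/(2n)_{2p+2m}] ζ(2n) (x/(2π))^{2n} = Σ_{k=1}^p (C_k/2^{p−1}) Σ_{j=0}^{2k−1} (−1)^j (∏_{i=1}^j (2k−i)) Σ_{n=1}^∞ ζ(2n)(x/(2π))^{2n}/(2n)_{2m+j+1}, where C_k = 1/Q'(a_k) with a_k = −(2m+2k−1)/2 and Q(t) = ∏_{r=1}^p (2t+2m+2r−1). -/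
/-!
For each `n` the coefficient of `ζ(2n) (x/2π)^{2n}` is a rational function of `n` that
decomposes exactly. Writing `z = 2n + 2m` and `Q(n) = ∏_{r<p} (z + 2r + 1)`, the even and odd
factors of `(2n)_{2p+2m} = (2n)_{2m} (z)_{2p}` give
`(m+n)_p / (2n)_{2p+2m} = 1 / (2^p (2n)_{2m} Q(n))`.
Heaviside's partial fractions (Lagrange interpolation of `1` at the roots `a_k` of `Q`) give
`1 / Q(n) = ∑_k C_k / (n - a_k)` with `C_k = 1 / Q'(a_k)` and `n - a_k = (z + 2k + 1) / 2`, and each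
`1 / ((2n)_{2m} (z + N))` with `N = 2k + 1` is the terminating alternating sum
`∑_{j ≤ N} (-1)^j N(N-1)⋯(N-j+1) / (2n)_{2m+j+1}`, which telescopes.
The identity then passes through `∑'` because `|ζ(2n)| ≤ π²/6` and `x / 2π < 1`
make every series absolutely convergent.
-/

open Real Finset

theorem prod_range_two_mul {M : Type*} [CommMonoid M] (g : ℕ → M) (p : ℕ) :
    ∏ i ∈ range (2 * p), g i = (∏ s ∈ range p, g (2 * s)) * ∏ s ∈ range p, g (2 * s + 1) := by
  induction p with
  | zero => simp
  | succ q ih =>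
    rw [show 2 * (q + 1) = 2 * q + 1 + 1 by ring, prod_range_succ, prod_range_succ, ih,
      prod_range_succ, prod_range_succ]
    ac_rfl

theorem prod_range_two_mul_add_two_mul {R : Type*} [CommSemiring R] (n : R) (m p : ℕ) :
    ∏ i ∈ range (2 * p + 2 * m), (2 * n + i) =
      (∏ i ∈ range (2 * m), (2 * n + i)) *
        (2 ^ p * (∏ s ∈ range p, ((m : R) + n + s)) * ∏ s ∈ range p, (2 * n + 2 * m + 2 * s + 1)) := by
  have heven : ∏ s ∈ range p, (2 * n + ((2 * m + 2 * s : ℕ) : R)) =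
      2 ^ p * ∏ s ∈ range p, ((m : R) + n + s) := by
    calc _ = ∏ s ∈ range p, (2 * ((m : R) + n + s)) := prod_congr rfl fun s _ => by
          push_cast; ring
      _ = _ := by rw [prod_mul_distrib, prod_const, card_range]
  have hodd : ∏ s ∈ range p, (2 * n + ((2 * m + (2 * s + 1) : ℕ) : R)) =
      ∏ s ∈ range p, (2 * n + 2 * m + 2 * s + 1) :=
    prod_congr rfl fun s _ => by push_cast; ring
  rw [add_comm, prod_range_add, prod_range_two_mul (fun i => 2 * n + ((2 * m + i : ℕ) : R)),
    heven, hodd]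

section Field

variable {K : Type*} [Field K]

theorem mul_sum_alternating_prod_sub_div_prod_add (y N : K) (J : ℕ)
    (hy : ∀ i ≤ J, y + i ≠ 0) :
    (y + N) * ∑ j ∈ range (J + 1), (-1) ^ j * (∏ i ∈ range j, (N - i)) /
        ∏ i ∈ range (j + 1), (y + i) =
      1 + (-1) ^ J * (∏ i ∈ range (J + 1), (N - i)) / ∏ i ∈ range (J + 1), (y + i) := by
  induction J with
  | zero =>
    have hy0 : y ≠ 0 := by simpa using hy 0 le_rfl
    simp only [zero_add, range_one, sum_singleton, pow_zero, range_zero, prod_empty, mul_one,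
      prod_singleton, Nat.cast_zero, add_zero, one_div, sub_zero, one_mul]
    field_simp
  | succ J ih =>
    have hB : ∏ i ∈ range (J + 1), (y + i) ≠ 0 :=
      prod_ne_zero_iff.mpr fun i hi => hy i (by simp at hi; omega)
    have hJ : y + (J + 1 : ℕ) ≠ 0 := hy (J + 1) le_rfl
    push_cast at hJ
    rw [sum_range_succ, mul_add, ih fun i hi => hy i (by omega),
      prod_range_succ (fun i : ℕ => N - i) (J + 1), prod_range_succ (fun i => y + i) (J + 1)]
    push_cast
    field_simp
    ring

theorem sum_alternating_prod_sub_div_prod_add (y : K) (N : ℕ) (hy : ∀ i ≤ N, y + i ≠ 0) :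
    ∑ j ∈ range (N + 1), (-1) ^ j * (∏ i ∈ range j, ((N : K) - i)) /
        ∏ i ∈ range (j + 1), (y + i) = (y + N)⁻¹ := by
  have hvanish : ∏ i ∈ range (N + 1), ((N : K) - i) = 0 :=
    prod_eq_zero (mem_range.mpr N.lt_succ_self) (sub_self _)
  refine (inv_eq_of_mul_eq_one_right ?_).symm
  rw [mul_sum_alternating_prod_sub_div_prod_add y N N hy, hvanish]
  simp

theorem sum_alternating_prod_sub_div_prod_add_add (y : K) (L N : ℕ) (hy : ∀ i : ℕ, y + i ≠ 0) :
    ∑ j ∈ range (N + 1), (-1) ^ j * (∏ i ∈ range j, ((N : K) - i)) /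
        ∏ i ∈ range (L + j + 1), (y + i) = ((∏ i ∈ range L, (y + i)) * (y + L + N))⁻¹ := by
  have hshift : ∀ j, ∏ i ∈ range (L + j + 1), (y + i) =
      (∏ i ∈ range L, (y + i)) * ∏ i ∈ range (j + 1), ((y + L) + i) := fun j => by
    rw [add_assoc, prod_range_add]
    push_cast
    simp only [add_assoc]
  calc _ = (∑ j ∈ range (N + 1), (-1) ^ j * (∏ i ∈ range j, ((N : K) - i)) /
        ∏ i ∈ range (j + 1), ((y + L) + i)) / ∏ i ∈ range L, (y + i) := by
        rw [sum_div]
        exact sum_congr rfl fun j _ => by rw [hshift, div_div, mul_comm (∏ i ∈ range L, _)]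
    _ = _ := by
        rw [sum_alternating_prod_sub_div_prod_add (y + L) N fun i _ => by
          simpa [add_assoc] using hy (L + i), div_eq_mul_inv, mul_inv_rev]

theorem sum_inv_prod_erase_sub_mul_inv_sub {ι : Type*} [DecidableEq ι] {s : Finset ι}
    {v : ι → K} (hvs : Set.InjOn v s) (hs : s.Nonempty) {z : K} (hz : ∀ i ∈ s, z ≠ v i) :
    ∑ k ∈ s, (∏ i ∈ s.erase k, (v k - v i))⁻¹ * (z - v k)⁻¹ = (∏ i ∈ s, (z - v i))⁻¹ := by
  have h := congrArg (Polynomial.eval z) (Lagrange.sum_basis hvs hs)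
  rw [Polynomial.eval_finsetSum, Polynomial.eval_one,
    sum_congr rfl fun k hk => Lagrange.eval_basis_not_at_node hk (hz k hk), ← mul_sum,
    Lagrange.eval_nodal] at h
  refine (inv_eq_of_mul_eq_one_right ?_).symm
  simpa only [Lagrange.nodalWeight, prod_inv_distrib] using h

variable [CharZero K]

theorem sum_inv_prod_erase_two_mul_sub_mul_inv_add (w : K) {p : ℕ} (hp : p ≠ 0)
    (hw : ∀ s ∈ range p, w + 2 * s + 1 ≠ 0) :
    ∑ k ∈ range p, (∏ r ∈ (range p).erase k, (2 * (r : K) - 2 * k))⁻¹ * (w + 2 * k + 1)⁻¹ =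
      (∏ s ∈ range p, (w + 2 * s + 1))⁻¹ := by
  have hinj : Set.InjOn (fun s : ℕ => -(2 * (s : K) + 1)) (range p) := fun a _ b _ hab => by
    simpa using hab
  have hroots : ∀ s ∈ range p, w ≠ -(2 * (s : K) + 1) := fun s hs h =>
    hw s hs (by rw [h]; ring)
  convert sum_inv_prod_erase_sub_mul_inv_sub hinj (nonempty_range_iff.mpr hp) hroots
    using 4 with k _ r _
  · exact prod_congr rfl fun r _ => by ring
  · ring
  · ring

theorem prod_div_prod_eq_sum_partial_fractions (n : K) (m : ℕ) {p : ℕ} (hp : p ≠ 0)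
    (hn : ∀ i : ℕ, 2 * n + i ≠ 0) :
    (∏ i ∈ range p, ((m : K) + n + i)) / ∏ i ∈ range (2 * p + 2 * m), (2 * n + i) =
      ∑ k ∈ range p, ((2 : K) ^ p)⁻¹ * (∏ r ∈ (range p).erase k, (2 * (r : K) - 2 * k))⁻¹ *
        ∑ j ∈ range (2 * (k + 1)), (-1) ^ j * (∏ i ∈ range j, (2 * (k : K) + 1 - i)) /
          ∏ i ∈ range (2 * m + j + 1), (2 * n + i) := by
  have hden := prod_range_two_mul_add_two_mul n m p
  set P := ∏ i ∈ range (2 * m), (2 * n + i)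
  have hP : P ≠ 0 := prod_ne_zero_iff.mpr fun i _ => hn i
  have hodd : ∀ s : ℕ, 2 * n + 2 * m + 2 * s + 1 ≠ 0 := fun s => by
    simpa [add_assoc] using hn (2 * m + 2 * s + 1)
  have hnum : ∏ s ∈ range p, ((m : K) + n + s) ≠ 0 := prod_ne_zero_iff.mpr fun s _ h =>
    hn (2 * m + 2 * s) (by push_cast; linear_combination 2 * h)
  have hinner : ∀ k : ℕ, ∑ j ∈ range (2 * (k + 1)),
      (-1) ^ j * (∏ i ∈ range j, (2 * (k : K) + 1 - i)) / ∏ i ∈ range (2 * m + j + 1), (2 * n + i) =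
        (P * (2 * n + 2 * m + 2 * k + 1))⁻¹ := fun k => by
    have := sum_alternating_prod_sub_div_prod_add_add (2 * n) (2 * m) (2 * k + 1) hn
    push_cast at this
    rw [show 2 * (k + 1) = 2 * k + 1 + 1 by ring]
    simpa only [← add_assoc] using this
  calc _ = ((2 : K) ^ p)⁻¹ * P⁻¹ * (∏ s ∈ range p, (2 * n + 2 * m + 2 * s + 1))⁻¹ := by
        rw [hden]
        have := prod_ne_zero_iff.mpr fun s (_ : s ∈ range p) => hodd s
        field_simp
    _ = _ := by
        rw [← sum_inv_prod_erase_two_mul_sub_mul_inv_add _ hp fun s _ => hodd s, mul_sum]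
        refine sum_congr rfl fun k _ => ?_
        rw [hinner, mul_inv]
        ring

end Field

theorem HasDerivAt.fun_finsetProd_of_eq_zero {𝕜 𝔸 ι : Type*} [NontriviallyNormedField 𝕜]
    [NormedCommRing 𝔸] [NormedAlgebra 𝕜 𝔸] [DecidableEq ι] {u : Finset ι} {f : ι → 𝕜 → 𝔸}
    {f' : ι → 𝔸} {x : 𝕜} {k : ι} (hf : ∀ i ∈ u, HasDerivAt (f i) (f' i) x) (hk : k ∈ u)
    (hzero : f k x = 0) :
    HasDerivAt (∏ i ∈ u, f i ·) ((∏ j ∈ u.erase k, f j x) * f' k) x := by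
  convert HasDerivAt.fun_finsetProd hf using 1
  rw [sum_eq_single_of_mem k hk fun i _ hik => ?_, smul_eq_mul]
  rw [prod_eq_zero (mem_erase.mpr ⟨Ne.symm hik, hk⟩) hzero, zero_smul]

theorem deriv_prod_range_affine_at_root (m p k : ℕ) (hk : k ∈ range p) :
    deriv (fun t : ℝ => ∏ r ∈ range p, (2 * t + 2 * m + 2 * r + 1))
        (-(2 * (m : ℝ) + 2 * k + 1) / 2) =
      2 * ∏ r ∈ (range p).erase k, (2 * (r : ℝ) - 2 * k) := by
  have hroot : ∀ r : ℕ,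
      2 * (-(2 * (m : ℝ) + 2 * k + 1) / 2) + 2 * m + 2 * r + 1 = 2 * r - 2 * k := fun r => by
    ring
  have hderiv : ∀ r ∈ range p, HasDerivAt (fun t : ℝ => 2 * t + 2 * m + 2 * r + 1) 2
      (-(2 * (m : ℝ) + 2 * k + 1) / 2) := fun r _ => by
    simpa using ((hasDerivAt_id _).const_mul 2).add_const (2 * (m : ℝ) + 2 * r + 1)
  rw [(HasDerivAt.fun_finsetProd_of_eq_zero hderiv hk (by rw [hroot, sub_self])).deriv, mul_comm]
  simp only [hroot]

theorem ofReal_inv_deriv_prod_range_affine_div_two_pow (m p k : ℕ) (hk : k ∈ range p) :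
    ((((deriv (fun t : ℝ => ∏ r ∈ range p, (2 * t + 2 * m + 2 * r + 1))
        (-(2 * (m : ℝ) + 2 * k + 1) / 2))⁻¹ / 2 ^ (p - 1) : ℝ)) : ℂ) =
      ((2 : ℂ) ^ p)⁻¹ * (∏ r ∈ (range p).erase k, (2 * (r : ℂ) - 2 * k))⁻¹ := by
  obtain ⟨q, rfl⟩ : ∃ q, p = q + 1 := ⟨p - 1, by have := mem_range.mp hk; omega⟩
  rw [deriv_prod_range_affine_at_root m _ k hk, Nat.add_sub_cancel, pow_succ]
  push_cast
  ring

theorem norm_riemannZeta_natCast_le {k : ℕ} (hk : 2 ≤ k) : ‖riemannZeta k‖ ≤ π ^ 2 / 6 := by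
  have hsum : Summable fun j : ℕ => ‖1 / (j : ℂ) ^ k‖ := by
    simpa using Real.summable_one_div_nat_pow.mpr hk
  rw [zeta_nat_eq_tsum_of_gt_one hk, ← hasSum_zeta_two.tsum_eq]
  refine (norm_tsum_le_tsum_norm hsum).trans
    (hsum.tsum_le_tsum (fun j => ?_) hasSum_zeta_two.summable)
  rcases Nat.eq_zero_or_pos j with rfl | hj
  · simp [zero_pow (by omega : k ≠ 0)]
  · simp only [norm_div, norm_one, norm_pow, Complex.norm_natCast]
    gcongr
    exact_mod_cast hj

theorem one_le_norm_prod_range_two_mul_add (n : ℕ+) (M : ℕ) :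
    1 ≤ ‖∏ i ∈ range M, (2 * (n : ℂ) + i)‖ := by
  have hcast : ∏ i ∈ range M, (2 * (n : ℂ) + i) =
      ((∏ i ∈ range M, (2 * (n : ℕ) + i) : ℕ) : ℂ) := by
    push_cast; rfl
  rw [hcast, Complex.norm_natCast, Nat.one_le_cast, Nat.one_le_iff_ne_zero]
  exact prod_ne_zero_iff.mpr fun i _ => by positivity

theorem summable_riemannZeta_two_mul_mul_pow_div_prod {w : ℂ} (hw : ‖w‖ < 1) (M : ℕ) :
    Summable fun n : ℕ+ =>
      riemannZeta (2 * n) * w ^ (2 * (n : ℕ)) / ∏ i ∈ range M, (2 * (n : ℂ) + i) := by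
  have hgeom : Summable fun n : ℕ+ => π ^ 2 / 6 * (‖w‖ ^ 2) ^ (n : ℕ) :=
    ((summable_geometric_of_lt_one (by positivity) (by nlinarith [norm_nonneg w])).mul_left
      _).comp_injective PNat.coe_injective
  refine hgeom.of_norm_bounded fun n => ?_
  have hzeta : ‖riemannZeta (2 * n)‖ ≤ π ^ 2 / 6 := by
    simpa using norm_riemannZeta_natCast_le (k := 2 * n) (by have := n.pos; omega)
  rw [norm_div, norm_mul, norm_pow, ← pow_mul]
  calc ‖riemannZeta (2 * n)‖ * ‖w‖ ^ (2 * (n : ℕ)) / ‖∏ i ∈ range M, (2 * (n : ℂ) + i)‖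
      ≤ ‖riemannZeta (2 * n)‖ * ‖w‖ ^ (2 * (n : ℕ)) :=
        div_le_self (by positivity) (one_le_norm_prod_range_two_mul_add n M)
    _ ≤ π ^ 2 / 6 * ‖w‖ ^ (2 * (n : ℕ)) := by gcongr

theorem zeta_pochhammer_general_decomposition_general (m p : ℕ) (hp : 1 ≤ p)
    (x : ℝ) (hx : 0 < x) (hx' : x < 2 * π) :
    ∑' n : ℕ+, (∏ i ∈ range p, ((m : ℂ) + n + i)) /
        (∏ i ∈ range (2 * p + 2 * m), (2 * (n : ℂ) + i)) * riemannZeta (2 * n) *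
        ((x / (2 * π) : ℝ) : ℂ) ^ (2 * (n : ℕ)) =
      ∑ k ∈ range p,
        ((((deriv (fun t : ℝ => ∏ r ∈ range p, (2 * t + 2 * m + 2 * r + 1))
              (-(2 * (m : ℝ) + 2 * k + 1) / 2))⁻¹ / 2 ^ (p - 1) : ℝ)) : ℂ) *
          ∑ j ∈ range (2 * (k + 1)),
            (-1) ^ j * (∏ i ∈ range j, (2 * (k : ℂ) + 1 - i)) *
              ∑' n : ℕ+, riemannZeta (2 * n) * ((x / (2 * π) : ℝ) : ℂ) ^ (2 * (n : ℕ)) /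
                (∏ i ∈ range (2 * m + j + 1), (2 * (n : ℂ) + i)) := by
  set w : ℂ := ((x / (2 * π) : ℝ) : ℂ)
  have hw : ‖w‖ < 1 := by
    rw [Complex.norm_real, norm_of_nonneg (by positivity), div_lt_one (by positivity)]
    exact hx'
  have hsummable := summable_riemannZeta_two_mul_mul_pow_div_prod hw
  have hterm : ∀ n : ℕ+,
      (∏ i ∈ range p, ((m : ℂ) + n + i)) / (∏ i ∈ range (2 * p + 2 * m), (2 * (n : ℂ) + i)) *
          riemannZeta (2 * n) * w ^ (2 * (n : ℕ)) =
        ∑ k ∈ range p, ∑ j ∈ range (2 * (k + 1)),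
          ((((deriv (fun t : ℝ => ∏ r ∈ range p, (2 * t + 2 * m + 2 * r + 1))
              (-(2 * (m : ℝ) + 2 * k + 1) / 2))⁻¹ / 2 ^ (p - 1) : ℝ)) : ℂ) *
            ((-1) ^ j * (∏ i ∈ range j, (2 * (k : ℂ) + 1 - i)) *
              (riemannZeta (2 * n) * w ^ (2 * (n : ℕ)) /
                ∏ i ∈ range (2 * m + j + 1), (2 * (n : ℂ) + i))) := fun n => by
    rw [prod_div_prod_eq_sum_partial_fractions (n : ℂ) m (by omega) fun i => by
      norm_cast; positivity, sum_mul, sum_mul]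
    refine sum_congr rfl fun k hk => ?_
    rw [ofReal_inv_deriv_prod_range_affine_div_two_pow m p k hk, mul_sum, sum_mul, sum_mul]
    exact sum_congr rfl fun j _ => by ring
  rw [tsum_congr hterm, Summable.tsum_finsetSum fun k _ =>
    summable_sum fun j _ => ((hsummable _).mul_left _).mul_left _]
  refine sum_congr rfl fun k _ => ?_
  rw [Summable.tsum_finsetSum fun j _ => ((hsummable _).mul_left _).mul_left _, mul_sum]
  simp only [tsum_mul_left]

theorem zeta_pochhammer_general_decomposition (m p : ℕ) (hm : 1 ≤ m) (hp : 1 ≤ p)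
    (x : ℝ) (hx : 0 < x) (hx' : x < 2 * π) :
    ∑' n : ℕ+, (∏ i ∈ range p, ((m : ℂ) + n + i)) /
        (∏ i ∈ range (2 * p + 2 * m), (2 * (n : ℂ) + i)) * riemannZeta (2 * n) *
        ((x / (2 * π) : ℝ) : ℂ) ^ (2 * (n : ℕ)) =
      ∑ k ∈ range p,
        ((((deriv (fun t : ℝ => ∏ r ∈ range p, (2 * t + 2 * m + 2 * r + 1))
              (-(2 * (m : ℝ) + 2 * k + 1) / 2))⁻¹ / 2 ^ (p - 1) : ℝ)) : ℂ) *
          ∑ j ∈ range (2 * (k + 1)),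
            (-1) ^ j * (∏ i ∈ range j, (2 * (k : ℂ) + 1 - i)) *
              ∑' n : ℕ+, riemannZeta (2 * n) * ((x / (2 * π) : ℝ) : ℂ) ^ (2 * (n : ℕ)) /
                (∏ i ∈ range (2 * m + j + 1), (2 * (n : ℂ) + i)) :=
  zeta_pochhammer_general_decomposition_general m p hp x hx hx'
end
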